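/- arXiv:0803.4206 — 3 statements merged into one kernel-verified Lean document; each statement's English description precedes it below -/
import Mathlib

section
/- Let the row/column index set of all matrices be partitioned into two blocks S ∪ T. For i ∈ {1,2}, let J_i be a symmetric real matrix and B_{i,1},…,B_{i,k_i} be real matrices, all block anti-diagonal with respect to the partition, and let A_{i,1},…,A_{i,m_i} be real matrices that are block diagonal with respect to the partition. Suppose there are entrywise non-negative vectors u_i ∈ ℝ^{k_i} with J_i = Σ_j u_i[j]·B_{i,j} for i ∈ {1,2}, and suppose there are vectors y_i ∈ ℝ^{m_i} and entrywise non-negative vectors z_i ∈ ℝ^{k_i} such that Σ_j y_i[j]·A_{i,j} − (Σ_j z_i[j]·B_{i,j} + J_i) is positive semidefinite for i ∈ {1,2}. Then the vector v ∈ ℝ^{k_1·k_2} defined by v[j,j'] = z_1[j]z_2[j'] + z_1[j]u_2[j'] + u_1[j]z_2[j'] is entrywise non-negative, and the matrix Σ_{j,j'} y_1[j]y_2[j']·(A_{1,j} ⊗ A_{2,j'}) − (Σ_{j,j'} v[j,j']·(B_{1,j} ⊗ B_{2,j'}) + J_1 ⊗ J_2) is positive semidefinite. -/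
/-!
Write `Yᵢ = ∑ yᵢ[j] Aᵢⱼ` and `Qᵢ = ∑ zᵢ[j] Bᵢⱼ + Jᵢ`, so that the hypotheses say `Yᵢ - Qᵢ ⪰ 0`.
Conjugating by the diagonal matrix with entries `±1` according to the block fixes the block
diagonal `Yᵢ` and negates the block anti-diagonal `Qᵢ`, hence also `Yᵢ + Qᵢ ⪰ 0`. Since
`Jᵢ = ∑ uᵢ[j] Bᵢⱼ`, the matrix to be shown positive semidefinite is `Y₁ ⊗ Y₂ - Q₁ ⊗ Q₂`, and
`2 (Y₁ ⊗ Y₂ - Q₁ ⊗ Q₂) = (Y₁ - Q₁) ⊗ (Y₂ + Q₂) + (Y₁ + Q₁) ⊗ (Y₂ - Q₂)`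
is a sum of Kronecker products of positive semidefinite matrices.
-/

open Matrix Kronecker BigOperators

open scoped ComplexOrder

namespace Matrix

variable {R : Type*}

theorem sum_smul_apply_eq_zero [Semiring R] {m n ι : Type*} [Fintype ι] {c : ι → R}
    {M : ι → Matrix m n R} {i : m} {j : n} (h : ∀ l, M l i j = 0) :
    (∑ l, c l • M l) i j = 0 := by
  simp [sum_apply, h]

theorem sum_smul_kronecker_sum_smul [CommSemiring R] {m n p q ι κ : Type*}
    [Fintype ι] [Fintype κ] (c : ι → R) (d : κ → R)
    (M : ι → Matrix m n R) (N : κ → Matrix p q R) :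
    (∑ i, c i • M i) ⊗ₖ (∑ j, d j • N j) = ∑ i, ∑ j, (c i * d j) • (M i ⊗ₖ N j) := by
  ext a b
  simp only [sum_apply, smul_apply, kroneckerMap_apply, smul_eq_mul, Finset.sum_mul_sum]
  exact Finset.sum_congr rfl fun i _ => Finset.sum_congr rfl fun j _ => by ring

theorem PosSemidef.add_of_sub_of_blockAntidiagonal [CommRing R] [PartialOrder R] [StarRing R]
    {n : Type*} [Fintype n] (p : n → Bool) {Y Q : Matrix n n R}
    (hY : ∀ i j, p i ≠ p j → Y i j = 0) (hQ : ∀ i j, p i = p j → Q i j = 0)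
    (h : (Y - Q).PosSemidef) : (Y + Q).PosSemidef := by
  classical
  let D : Matrix n n R := diagonal fun i => if p i then 1 else -1
  have hD : Dᴴ = D := by
    rw [diagonal_conjTranspose]
    congr 1
    ext i
    by_cases hi : p i <;> simp [hi]
  have hconj : D * (Y - Q) * D = Y + Q := by
    ext i j
    rw [mul_diagonal, diagonal_mul]
    by_cases hij : p i = p j
    · simp only [sub_apply, add_apply, hQ i j hij, hij]
      cases p j <;> simp
    · simp only [sub_apply, add_apply, hY i j hij]
      cases hi : p i <;> cases hj : p j <;> simp_all
  simpa [hD, hconj] using h.mul_mul_conjTranspose_same D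

theorem PosSemidef.kronecker_sub_kronecker {𝕜 : Type*} [RCLike 𝕜] {m n : Type*}
    [Fintype m] [Fintype n] {Y₁ Q₁ : Matrix m m 𝕜} {Y₂ Q₂ : Matrix n n 𝕜}
    (h₁ : (Y₁ - Q₁).PosSemidef) (h₁' : (Y₁ + Q₁).PosSemidef)
    (h₂ : (Y₂ - Q₂).PosSemidef) (h₂' : (Y₂ + Q₂).PosSemidef) :
    (Y₁ ⊗ₖ Y₂ - Q₁ ⊗ₖ Q₂).PosSemidef := by
  have hdecomp : Y₁ ⊗ₖ Y₂ - Q₁ ⊗ₖ Q₂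
      = (2⁻¹ : 𝕜) • ((Y₁ - Q₁) ⊗ₖ (Y₂ + Q₂) + (Y₁ + Q₁) ⊗ₖ (Y₂ - Q₂)) := by
    ext a b
    simp only [sub_apply, add_apply, smul_apply, kroneckerMap_apply, smul_eq_mul]
    ring
  rw [hdecomp]
  exact ((h₁.kronecker h₂').add (h₁'.kronecker h₂)).smul (by positivity)

end Matrix

theorem stmt_0_general {n : Type*} [Fintype n]
    (p : n → Bool)
    {k1 k2 m1 m2 : ℕ}
    (J1 J2 : Matrix n n ℝ)
    (B1 : Fin k1 → Matrix n n ℝ) (B2 : Fin k2 → Matrix n n ℝ)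
    (A1 : Fin m1 → Matrix n n ℝ) (A2 : Fin m2 → Matrix n n ℝ)
    (hJ1anti : ∀ i j, p i = p j → J1 i j = 0)
    (hJ2anti : ∀ i j, p i = p j → J2 i j = 0)
    (hB1anti : ∀ l i j, p i = p j → B1 l i j = 0)
    (hB2anti : ∀ l i j, p i = p j → B2 l i j = 0)
    (hA1diag : ∀ l i j, p i ≠ p j → A1 l i j = 0)
    (hA2diag : ∀ l i j, p i ≠ p j → A2 l i j = 0)
    (u1 : Fin k1 → ℝ) (u2 : Fin k2 → ℝ)
    (hu1 : ∀ j, 0 ≤ u1 j) (hu2 : ∀ j, 0 ≤ u2 j)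
    (hJ1span : J1 = ∑ j, u1 j • B1 j) (hJ2span : J2 = ∑ j, u2 j • B2 j)
    (y1 : Fin m1 → ℝ) (y2 : Fin m2 → ℝ)
    (z1 : Fin k1 → ℝ) (z2 : Fin k2 → ℝ)
    (hz1 : ∀ j, 0 ≤ z1 j) (hz2 : ∀ j, 0 ≤ z2 j)
    (h1 : ((∑ j, y1 j • A1 j) - ((∑ j, z1 j • B1 j) + J1)).PosSemidef)
    (h2 : ((∑ j, y2 j • A2 j) - ((∑ j, z2 j • B2 j) + J2)).PosSemidef) :
    (∀ j j', 0 ≤ z1 j * z2 j' + z1 j * u2 j' + u1 j * z2 j') ∧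
    ((∑ j, ∑ j', (y1 j * y2 j') • (A1 j ⊗ₖ A2 j')) -
      ((∑ j, ∑ j', (z1 j * z2 j' + z1 j * u2 j' + u1 j * z2 j') • (B1 j ⊗ₖ B2 j')) +
        J1 ⊗ₖ J2)).PosSemidef := by
  refine ⟨fun j j' => add_nonneg (add_nonneg (mul_nonneg (hz1 j) (hz2 j'))
    (mul_nonneg (hz1 j) (hu2 j'))) (mul_nonneg (hu1 j) (hz2 j')), ?_⟩
  set Y1 := ∑ j, y1 j • A1 j
  set Y2 := ∑ j, y2 j • A2 j
  set Q1 := ∑ j, z1 j • B1 j + J1 with hQ1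
  set Q2 := ∑ j, z2 j • B2 j + J2 with hQ2
  have hY : ∑ j, ∑ j', (y1 j * y2 j') • (A1 j ⊗ₖ A2 j') = Y1 ⊗ₖ Y2 :=
    (sum_smul_kronecker_sum_smul ..).symm
  have hQ : ∑ j, ∑ j', (z1 j * z2 j' + z1 j * u2 j' + u1 j * z2 j') • (B1 j ⊗ₖ B2 j')
      + J1 ⊗ₖ J2 = Q1 ⊗ₖ Q2 := by
    simp only [add_smul, Finset.sum_add_distrib, ← sum_smul_kronecker_sum_smul, ← hJ1span,
      ← hJ2span, hQ1, hQ2, add_kronecker, kronecker_add]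
    abel
  have h1' : (Y1 + Q1).PosSemidef :=
    h1.add_of_sub_of_blockAntidiagonal p
      (fun i j hij => sum_smul_apply_eq_zero (hA1diag · i j hij)) fun i j hij => by
        rw [hQ1, Matrix.add_apply, sum_smul_apply_eq_zero (hB1anti · i j hij), hJ1anti i j hij,
          add_zero]
  have h2' : (Y2 + Q2).PosSemidef :=
    h2.add_of_sub_of_blockAntidiagonal p
      (fun i j hij => sum_smul_apply_eq_zero (hA2diag · i j hij)) fun i j hij => by
        rw [hQ2, Matrix.add_apply, sum_smul_apply_eq_zero (hB2anti · i j hij), hJ2anti i j hij,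
          add_zero]
  rw [hY, hQ]
  exact h1.kronecker_sub_kronecker h1' h2 h2'

theorem stmt_0 {n : Type*} [Fintype n] [DecidableEq n]
    (p : n → Bool)
    {k1 k2 m1 m2 : ℕ}
    (J1 J2 : Matrix n n ℝ)
    (B1 : Fin k1 → Matrix n n ℝ) (B2 : Fin k2 → Matrix n n ℝ)
    (A1 : Fin m1 → Matrix n n ℝ) (A2 : Fin m2 → Matrix n n ℝ)
    (hJ1sym : J1.IsSymm) (hJ2sym : J2.IsSymm)
    (hJ1anti : ∀ i j, p i = p j → J1 i j = 0)
    (hJ2anti : ∀ i j, p i = p j → J2 i j = 0)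
    (hB1anti : ∀ l i j, p i = p j → B1 l i j = 0)
    (hB2anti : ∀ l i j, p i = p j → B2 l i j = 0)
    (hA1diag : ∀ l i j, p i ≠ p j → A1 l i j = 0)
    (hA2diag : ∀ l i j, p i ≠ p j → A2 l i j = 0)
    (u1 : Fin k1 → ℝ) (u2 : Fin k2 → ℝ)
    (hu1 : ∀ j, 0 ≤ u1 j) (hu2 : ∀ j, 0 ≤ u2 j)
    (hJ1span : J1 = ∑ j, u1 j • B1 j) (hJ2span : J2 = ∑ j, u2 j • B2 j)
    (y1 : Fin m1 → ℝ) (y2 : Fin m2 → ℝ)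
    (z1 : Fin k1 → ℝ) (z2 : Fin k2 → ℝ)
    (hz1 : ∀ j, 0 ≤ z1 j) (hz2 : ∀ j, 0 ≤ z2 j)
    (h1 : ((∑ j, y1 j • A1 j) - ((∑ j, z1 j • B1 j) + J1)).PosSemidef)
    (h2 : ((∑ j, y2 j • A2 j) - ((∑ j, z2 j • B2 j) + J2)).PosSemidef) :
    (∀ j j', 0 ≤ z1 j * z2 j' + z1 j * u2 j' + u1 j * z2 j') ∧
    ((∑ j, ∑ j', (y1 j * y2 j') • (A1 j ⊗ₖ A2 j')) -
      ((∑ j, ∑ j', (z1 j * z2 j' + z1 j * u2 j' + u1 j * z2 j') • (B1 j ⊗ₖ B2 j')) +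
        J1 ⊗ₖ J2)).PosSemidef :=
  stmt_0_general p J1 J2 B1 B2 A1 A2 hJ1anti hJ2anti hB1anti hB2anti hA1diag hA2diag u1 u2 hu1 hu2
    hJ1span hJ2span y1 y2 z1 z2 hz1 hz2 h1 h2
end

section
/- Let the row/column index set of all matrices be partitioned into two blocks S ∪ T. For i ∈ {1,2}, let J_i be symmetric and block anti-diagonal, let B_{i,1},…,B_{i,k_i} be block anti-diagonal, let A_{i,1},…,A_{i,m_i} be block diagonal, and let b_i ∈ ℝ^{m_i}. Suppose: (a) there are non-negative vectors u_i with J_i = Σ_j u_i[j]·B_{i,j}; (b) there are vectors y_i ∈ ℝ^{m_i} and non-negative vectors z_i ∈ ℝ^{k_i} with Σ_j y_i[j]·A_{i,j} − (Σ_j z_i[j]·B_{i,j} + J_i) ⪰ 0 and y_iᵀb_i = α_i. Then for every positive semidefinite matrix X satisfying (A_{1,j} ⊗ A_{2,j'}) • X = b_1[j]·b_2[j'] for all j,j' and (B_{1,j} ⊗ B_{2,j'}) • X ≥ 0 for all j,j', one has (J_1 ⊗ J_2) • X ≤ α_1 · α_2. (In other words, under bipartiteness and the condition that J_i lies in the positive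 span of the B_{i,j}, the optimal value of the product semidefinite program is at most the product α_1·α_2 of dual-feasible values of the factors.) -/
open Matrix Kronecker BigOperators

/-- Frobenius inner product of two real matrices. -/
def frob {α β : Type*} [Fintype α] [Fintype β] (A X : Matrix α β ℝ) : ℝ :=
  ∑ i, ∑ j, A i j * X i j

/-!
Write `P₁ = ∑ y₁ⱼ A₁ⱼ` and `Q₁ = ∑ z₁ⱼ B₁ⱼ + J₁ = ∑ (u₁ⱼ + z₁ⱼ) B₁ⱼ`, so that dual feasibility says
`P₁ - Q₁ ⪰ 0`. Conjugating by the diagonal sign matrix `±1` of the bipartition fixes the block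
diagonal `P₁` and negates the block anti-diagonal `Q₁`, so `P₁ + Q₁ ⪰ 0` as well; likewise for the
second factor. Then
`2 (P₁ ⊗ P₂ - Q₁ ⊗ Q₂) = (P₁ - Q₁) ⊗ (P₂ + Q₂) + (P₁ + Q₁) ⊗ (P₂ - Q₂) ⪰ 0`,
so `(Q₁ ⊗ Q₂) • X ≤ (P₁ ⊗ P₂) • X = α₁ α₂`. Finally `J₁ ⊗ J₂` is dominated by `Q₁ ⊗ Q₂`
coefficientwise in the cone spanned by the `B₁ⱼ ⊗ B₂ⱼ'`, on which `X` is non-negative.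
-/

section Frobenius

variable {α β : Type*} [Fintype α] [Fintype β]

lemma frob_eq_trace_mul_transpose (A X : Matrix α β ℝ) : frob A X = (A * Xᵀ).trace := by
  simp [frob, trace, mul_apply]

lemma frob_add (A B X : Matrix α β ℝ) : frob (A + B) X = frob A X + frob B X := by
  simp [frob_eq_trace_mul_transpose, Matrix.add_mul]

lemma frob_sub (A B X : Matrix α β ℝ) : frob (A - B) X = frob A X - frob B X := by
  simp [frob_eq_trace_mul_transpose, Matrix.sub_mul]

lemma frob_smul (c : ℝ) (A X : Matrix α β ℝ) : frob (c • A) X = c * frob A X := by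
  simp [frob_eq_trace_mul_transpose]

lemma frob_sum {ι : Type*} (s : Finset ι) (A : ι → Matrix α β ℝ) (X : Matrix α β ℝ) :
    frob (∑ l ∈ s, A l) X = ∑ l ∈ s, frob (A l) X := by
  simp [frob_eq_trace_mul_transpose, Matrix.sum_mul, trace_sum]

lemma Matrix.PosSemidef.frob_nonneg {A X : Matrix α α ℝ} (hA : A.PosSemidef) (hX : X.PosSemidef) :
    0 ≤ frob A X := by
  classical
  -- with `A = Cᴴ C`, `frob A X = tr (C X Cᴴ)`
  open scoped MatrixOrder in
  obtain ⟨C, rfl⟩ := CStarAlgebra.nonneg_iff_eq_star_mul_self.mp hA.nonneg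
  have hXt : Xᵀ = X := by
    rw [← conjTranspose_eq_transpose_of_trivial, hX.isHermitian.eq]
  rw [frob_eq_trace_mul_transpose, hXt, star_eq_conjTranspose, ← trace_mul_cycle C X]
  exact (hX.mul_mul_conjTranspose_same C).trace_nonneg

end Frobenius

section Kronecker

variable {α β ι κ : Type*} [Fintype α] [Fintype β] [Fintype ι] [Fintype κ]

lemma frob_sum_smul_kronecker_sum_smul (c : ι → ℝ) (d : κ → ℝ) (M : ι → Matrix α α ℝ)
    (N : κ → Matrix β β ℝ) (X : Matrix (α × β) (α × β) ℝ) :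
    frob ((∑ i, c i • M i) ⊗ₖ ∑ j, d j • N j) X = ∑ i, ∑ j, c i * d j * frob (M i ⊗ₖ N j) X := by
  have hexpand : (∑ i, c i • M i) ⊗ₖ (∑ j, d j • N j) = ∑ i, ∑ j, (c i * d j) • (M i ⊗ₖ N j) := by
    ext a b
    simp only [kroneckerMap_apply, Matrix.sum_apply, Matrix.smul_apply, smul_eq_mul,
      Finset.sum_mul_sum]
    exact Finset.sum_congr rfl fun i _ => Finset.sum_congr rfl fun j _ => by ring
  simp only [hexpand, frob_sum, frob_smul]

lemma frob_sum_smul_kronecker_sum_smul_le {c c' : ι → ℝ} {d d' : κ → ℝ}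
    (hc : 0 ≤ c) (hcc' : c ≤ c') (hd : 0 ≤ d) (hdd' : d ≤ d')
    {M : ι → Matrix α α ℝ} {N : κ → Matrix β β ℝ} {X : Matrix (α × β) (α × β) ℝ}
    (hMN : ∀ i j, 0 ≤ frob (M i ⊗ₖ N j) X) :
    frob ((∑ i, c i • M i) ⊗ₖ ∑ j, d j • N j) X
      ≤ frob ((∑ i, c' i • M i) ⊗ₖ ∑ j, d' j • N j) X := by
  simp only [frob_sum_smul_kronecker_sum_smul]
  refine Finset.sum_le_sum fun i _ => Finset.sum_le_sum fun j _ =>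
    mul_le_mul_of_nonneg_right ?_ (hMN i j)
  exact mul_le_mul (hcc' i) (hdd' j) (hd j) ((hc i).trans (hcc' i))

lemma frob_kronecker_le_of_posSemidef {P₁ Q₁ : Matrix α α ℝ} {P₂ Q₂ : Matrix β β ℝ}
    {X : Matrix (α × β) (α × β) ℝ}
    (h₁ : (P₁ - Q₁).PosSemidef) (h₁' : (P₁ + Q₁).PosSemidef)
    (h₂ : (P₂ - Q₂).PosSemidef) (h₂' : (P₂ + Q₂).PosSemidef) (hX : X.PosSemidef) :
    frob (Q₁ ⊗ₖ Q₂) X ≤ frob (P₁ ⊗ₖ P₂) X := by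
  have hsum : (P₁ - Q₁) ⊗ₖ (P₂ + Q₂) + (P₁ + Q₁) ⊗ₖ (P₂ - Q₂)
      = (2 : ℝ) • (P₁ ⊗ₖ P₂) - (2 : ℝ) • (Q₁ ⊗ₖ Q₂) := by
    ext a b
    simp only [kroneckerMap_apply, Matrix.sub_apply, Matrix.add_apply, Matrix.smul_apply,
      smul_eq_mul]
    ring
  have hnonneg := add_nonneg ((h₁.kronecker h₂').frob_nonneg hX) ((h₁'.kronecker h₂).frob_nonneg hX)
  rw [← frob_add, hsum, frob_sub, frob_smul, frob_smul] at hnonneg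
  linarith

end Kronecker

section Bipartite

variable {n ι R : Type*}

def blockDiagSubmodule [Semiring R] (p : n → ι) : Submodule R (Matrix n n R) where
  carrier := {M | ∀ i j, p i ≠ p j → M i j = 0}
  add_mem' hM hN i j h := by simp [hM i j h, hN i j h]
  zero_mem' _ _ _ := rfl
  smul_mem' c M hM i j h := by simp [hM i j h]

def blockAntidiagSubmodule [Semiring R] (p : n → ι) : Submodule R (Matrix n n R) where
  carrier := {M | ∀ i j, p i = p j → M i j = 0}
  add_mem' hM hN i j h := by simp [hM i j h, hN i j h]
  zero_mem' _ _ _ := rfl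
  smul_mem' c M hM i j h := by simp [hM i j h]

open scoped ComplexOrder in
lemma Matrix.PosSemidef.add_of_sub {𝕜 : Type*} [RCLike 𝕜] [Fintype n] [DecidableEq n] {p : n → Bool}
    {P Q : Matrix n n 𝕜} (hP : P ∈ blockDiagSubmodule p) (hQ : Q ∈ blockAntidiagSubmodule p)
    (h : (P - Q).PosSemidef) : (P + Q).PosSemidef := by
  set D : Matrix n n 𝕜 := diagonal fun i => if p i then -1 else 1
  have hD : Dᴴ = D := by
    rw [diagonal_conjTranspose]
    congr! with i
    split_ifs <;> simp_all
  have hconj : D * (P - Q) * Dᴴ = P + Q := by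
    ext i j
    rw [hD, mul_diagonal, diagonal_mul, Matrix.sub_apply, Matrix.add_apply]
    have hPij := hP i j
    have hQij := hQ i j
    cases hi : p i <;> cases hj : p j <;> simp_all
  simpa [hconj] using h.mul_mul_conjTranspose_same D

end Bipartite

theorem stmt_1_general {n : Type*} [Fintype n] [DecidableEq n]
    (p : n → Bool)
    {k1 k2 m1 m2 : ℕ}
    (J1 J2 : Matrix n n ℝ)
    (B1 : Fin k1 → Matrix n n ℝ) (B2 : Fin k2 → Matrix n n ℝ)
    (A1 : Fin m1 → Matrix n n ℝ) (A2 : Fin m2 → Matrix n n ℝ)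
    (b1 : Fin m1 → ℝ) (b2 : Fin m2 → ℝ)
    (α1 α2 : ℝ)
    (hB1anti : ∀ l i j, p i = p j → B1 l i j = 0)
    (hB2anti : ∀ l i j, p i = p j → B2 l i j = 0)
    (hA1diag : ∀ l i j, p i ≠ p j → A1 l i j = 0)
    (hA2diag : ∀ l i j, p i ≠ p j → A2 l i j = 0)
    (u1 : Fin k1 → ℝ) (u2 : Fin k2 → ℝ)
    (hu1 : ∀ j, 0 ≤ u1 j) (hu2 : ∀ j, 0 ≤ u2 j)
    (hJ1span : J1 = ∑ j, u1 j • B1 j) (hJ2span : J2 = ∑ j, u2 j • B2 j)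
    (y1 : Fin m1 → ℝ) (y2 : Fin m2 → ℝ)
    (z1 : Fin k1 → ℝ) (z2 : Fin k2 → ℝ)
    (hz1 : ∀ j, 0 ≤ z1 j) (hz2 : ∀ j, 0 ≤ z2 j)
    (h1 : ((∑ j, y1 j • A1 j) - ((∑ j, z1 j • B1 j) + J1)).PosSemidef)
    (h2 : ((∑ j, y2 j • A2 j) - ((∑ j, z2 j • B2 j) + J2)).PosSemidef)
    (hy1b1 : ∑ j, y1 j * b1 j = α1) (hy2b2 : ∑ j, y2 j * b2 j = α2)
    (X : Matrix (n × n) (n × n) ℝ)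
    (hX : X.PosSemidef)
    (hXA : ∀ j j', frob (A1 j ⊗ₖ A2 j') X = b1 j * b2 j')
    (hXB : ∀ j j', 0 ≤ frob (B1 j ⊗ₖ B2 j') X) :
    frob (J1 ⊗ₖ J2) X ≤ α1 * α2 := by
  have hQ1eq : ∑ j, z1 j • B1 j + J1 = ∑ j, (u1 j + z1 j) • B1 j := by
    simp only [hJ1span, add_smul, Finset.sum_add_distrib, add_comm]
  have hQ2eq : ∑ j, z2 j • B2 j + J2 = ∑ j, (u2 j + z2 j) • B2 j := by
    simp only [hJ2span, add_smul, Finset.sum_add_distrib, add_comm]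
  rw [hQ1eq] at h1
  rw [hQ2eq] at h2
  have hP1 : ∑ j, y1 j • A1 j ∈ blockDiagSubmodule p :=
    sum_mem fun j _ => Submodule.smul_mem _ _ (hA1diag j)
  have hP2 : ∑ j, y2 j • A2 j ∈ blockDiagSubmodule p :=
    sum_mem fun j _ => Submodule.smul_mem _ _ (hA2diag j)
  have hQ1 : ∑ j, (u1 j + z1 j) • B1 j ∈ blockAntidiagSubmodule p :=
    sum_mem fun j _ => Submodule.smul_mem _ _ (hB1anti j)
  have hQ2 : ∑ j, (u2 j + z2 j) • B2 j ∈ blockAntidiagSubmodule p :=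
    sum_mem fun j _ => Submodule.smul_mem _ _ (hB2anti j)
  calc frob (J1 ⊗ₖ J2) X
      ≤ frob ((∑ j, (u1 j + z1 j) • B1 j) ⊗ₖ ∑ j, (u2 j + z2 j) • B2 j) X := by
        rw [hJ1span, hJ2span]
        exact frob_sum_smul_kronecker_sum_smul_le hu1 (fun j => le_add_of_nonneg_right (hz1 j))
          hu2 (fun j => le_add_of_nonneg_right (hz2 j)) hXB
    _ ≤ frob ((∑ j, y1 j • A1 j) ⊗ₖ ∑ j, y2 j • A2 j) X :=
        frob_kronecker_le_of_posSemidef h1 (h1.add_of_sub hP1 hQ1) h2 (h2.add_of_sub hP2 hQ2) hX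
    _ = (∑ j, y1 j * b1 j) * ∑ j, y2 j * b2 j := by
        simp only [frob_sum_smul_kronecker_sum_smul, hXA, Finset.sum_mul_sum]
        exact Finset.sum_congr rfl fun j _ => Finset.sum_congr rfl fun j' _ => by ring
    _ = α1 * α2 := by rw [hy1b1, hy2b2]

theorem stmt_1 {n : Type*} [Fintype n] [DecidableEq n]
    (p : n → Bool)
    {k1 k2 m1 m2 : ℕ}
    (J1 J2 : Matrix n n ℝ)
    (B1 : Fin k1 → Matrix n n ℝ) (B2 : Fin k2 → Matrix n n ℝ)
    (A1 : Fin m1 → Matrix n n ℝ) (A2 : Fin m2 → Matrix n n ℝ)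
    (b1 : Fin m1 → ℝ) (b2 : Fin m2 → ℝ)
    (α1 α2 : ℝ)
    (hJ1sym : J1.IsSymm) (hJ2sym : J2.IsSymm)
    (hJ1anti : ∀ i j, p i = p j → J1 i j = 0)
    (hJ2anti : ∀ i j, p i = p j → J2 i j = 0)
    (hB1anti : ∀ l i j, p i = p j → B1 l i j = 0)
    (hB2anti : ∀ l i j, p i = p j → B2 l i j = 0)
    (hA1diag : ∀ l i j, p i ≠ p j → A1 l i j = 0)
    (hA2diag : ∀ l i j, p i ≠ p j → A2 l i j = 0)
    (u1 : Fin k1 → ℝ) (u2 : Fin k2 → ℝ)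
    (hu1 : ∀ j, 0 ≤ u1 j) (hu2 : ∀ j, 0 ≤ u2 j)
    (hJ1span : J1 = ∑ j, u1 j • B1 j) (hJ2span : J2 = ∑ j, u2 j • B2 j)
    (y1 : Fin m1 → ℝ) (y2 : Fin m2 → ℝ)
    (z1 : Fin k1 → ℝ) (z2 : Fin k2 → ℝ)
    (hz1 : ∀ j, 0 ≤ z1 j) (hz2 : ∀ j, 0 ≤ z2 j)
    (h1 : ((∑ j, y1 j • A1 j) - ((∑ j, z1 j • B1 j) + J1)).PosSemidef)
    (h2 : ((∑ j, y2 j • A2 j) - ((∑ j, z2 j • B2 j) + J2)).PosSemidef)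
    (hy1b1 : ∑ j, y1 j * b1 j = α1) (hy2b2 : ∑ j, y2 j * b2 j = α2)
    (X : Matrix (n × n) (n × n) ℝ)
    (hX : X.PosSemidef)
    (hXA : ∀ j j', frob (A1 j ⊗ₖ A2 j') X = b1 j * b2 j')
    (hXB : ∀ j j', 0 ≤ frob (B1 j ⊗ₖ B2 j') X) :
    frob (J1 ⊗ₖ J2) X ≤ α1 * α2 :=
  stmt_1_general p J1 J2 B1 B2 A1 A2 b1 b2 α1 α2 hB1anti hB2anti hA1diag hA2diag u1 u2 hu1 hu2
    hJ1span hJ2span y1 y2 z1 z2 hz1 hz2 h1 h2 hy1b1 hy2b2 X hX hXA hXB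
end

section
/- (Counterexample, product instance has positive value.) There exists a 4×4 positive semidefinite real matrix X with X[0,0] + X[1,1] + X[2,2] + X[3,3] = 1, X[0,3] ≥ 0, X[1,2] ≥ 0, X[2,1] ≥ 0, X[3,0] ≥ 0, and X[0,3] + X[1,2] + X[2,1] + X[3,0] > 0. (This shows that the product of the zero-value program with objective J having J[0,1] = J[1,0] = −1, constraint I • X = 1, and non-negativity constraints X[0,1] ≥ 0, X[1,0] ≥ 0, has strictly positive value, since J ⊗ J has entries +1 exactly at positions (0,3), (1,2), (2,1), (3,0); hence without the condition that J lies in the positive span of the non-negativity constraint matrices, the product theorem fails.) -/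
open Matrix

theorem stmt_10 :
    ∃ X : Matrix (Fin 4) (Fin 4) ℝ, X.PosSemidef ∧
      X 0 0 + X 1 1 + X 2 2 + X 3 3 = 1 ∧
      0 ≤ X 0 3 ∧ 0 ≤ X 1 2 ∧ 0 ≤ X 2 1 ∧ 0 ≤ X 3 0 ∧
      0 < X 0 3 + X 1 2 + X 2 1 + X 3 0 := by
  let v : Fin 4 → ℝ := ![1, 0, 0, 1]
  have hpsd : (vecMulVec v v).PosSemidef := posSemidef_vecMulVec_self_star v
  refine ⟨(2⁻¹ : ℝ) • vecMulVec v v, hpsd.smul (by norm_num), ?_⟩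
  simp [v]
  norm_num
end
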